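/- arXiv:2012.00673 — 2 statements merged into one kernel-verified Lean document; each statement's English description precedes it below -/
import Mathlib

section
/- Let n ≥ 1 be an integer, p ∈ (0,1), Sp ∈ [0,1], and s_1,…,s_n ∈ [0,1]. Consider the probability model in which X_1,…,X_n are independent Bernoulli(p) random variables and, conditionally on S = X_1+⋯+X_n, the pool test outcome T ∈ {0,1} satisfies P(T = 1 | S = k) = s_k for 1 ≤ k ≤ n and P(T = 1 | S = 0) = 1-Sp. If P(T=0) > 0, then the posterior probability that a given subject is positive after a negative pool test is P(X_1 = 1 | T = 0) = p·Σ_{k=1}^n (1-s_k)·Pr(k-1;n-1,p) / [ Σ_{k=1}^n (1-s_k)·Pr(k;n,p) + Sp·(1-p)^n ]. -/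
/-!
Identify a vector `ω : ι → Bool` with the set `A` of its positive coordinates: its weight
is `p ^ #A * (1 - p) ^ (card ι - #A)`, so a sum of a function of `#A` over all vectors
collapses, counting subsets by cardinality, to a sum against binomial probabilities; this is
`P(T = 0)`. For the numerator, a vector on `Fin (m + 1)` whose first subject is positive is
`Fin.cons true ω'`, with weight `p` times that of `ω'` and one more positive, which gives the
factor `p` and the shifted binomial `Pr (k - 1) m p`.
-/

open Finset

noncomputable def Pr (k n : ℕ) (p : ℝ) : ℝ :=
  (n.choose k : ℝ) * p ^ k * (1 - p) ^ (n - k)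

theorem Finset.sum_Icc_one_eq_sum_range {M : Type*} [AddCommMonoid M] (f : ℕ → M) (n : ℕ) :
    ∑ k ∈ Icc 1 n, f k = ∑ k ∈ range n, f (k + 1) := by
  rw [range_eq_Ico, sum_Ico_add', ← Ico_add_one_right_eq_Icc, zero_add]

section BernoulliVector

variable {ι : Type*} [Fintype ι]

def bernoulliWeight (p : ℝ) (ω : ι → Bool) : ℝ := ∏ i, if ω i then p else 1 - p

def numTrue (ω : ι → Bool) : ℕ := #{i | ω i = true}

def boolFunEquivFinset [DecidableEq ι] : (ι → Bool) ≃ Finset ι where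
  toFun ω := {i | ω i = true}
  invFun A i := decide (i ∈ A)
  left_inv ω := by funext i; simp
  right_inv A := by ext i; simp

variable [DecidableEq ι]

theorem numTrue_boolFunEquivFinset_symm (A : Finset ι) :
    numTrue (boolFunEquivFinset.symm A) = #A := by
  simp [numTrue, boolFunEquivFinset]

theorem bernoulliWeight_boolFunEquivFinset_symm (p : ℝ) (A : Finset ι) :
    bernoulliWeight p (boolFunEquivFinset.symm A) = p ^ #A * (1 - p) ^ (Fintype.card ι - #A) := by
  simp [bernoulliWeight, boolFunEquivFinset, prod_ite, filter_not, card_univ_sdiff]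

theorem sum_bernoulliWeight_mul_numTrue (p : ℝ) (f : ℕ → ℝ) :
    ∑ ω : ι → Bool, bernoulliWeight p ω * f (numTrue ω)
      = ∑ k ∈ range (Fintype.card ι + 1), Pr k (Fintype.card ι) p * f k := by
  rw [← boolFunEquivFinset.symm.sum_comp]
  simp only [bernoulliWeight_boolFunEquivFinset_symm, numTrue_boolFunEquivFinset_symm]
  rw [← powerset_univ,
    sum_powerset_apply_card (fun k => p ^ k * (1 - p) ^ (Fintype.card ι - k) * f k), card_univ]
  simp only [Pr, nsmul_eq_mul, mul_assoc]

end BernoulliVector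

section FinCons

variable {m : ℕ}

theorem bernoulliWeight_cons (p : ℝ) (b : Bool) (ω : Fin m → Bool) :
    bernoulliWeight p (Fin.cons b ω : Fin (m + 1) → Bool)
      = (if b then p else 1 - p) * bernoulliWeight p ω := by
  simp [bernoulliWeight, Fin.prod_univ_succ]

theorem numTrue_cons_true (ω : Fin m → Bool) :
    numTrue (Fin.cons true ω : Fin (m + 1) → Bool) = numTrue ω + 1 := by
  simp [numTrue, Fin.card_filter_univ_succ]

theorem Fin.sum_filter_apply_zero_eq {α M : Type*} [Fintype α] [DecidableEq α]
    [AddCommMonoid M] (a : α) (g : (Fin (m + 1) → α) → M) :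
    ∑ ω with ω 0 = a, g ω = ∑ ω : Fin m → α, g (Fin.cons a ω) := by
  rw [sum_filter, ← (Fin.consEquiv fun _ => α).sum_comp, Fintype.sum_prod_type]
  simp [Fin.consEquiv]

theorem sum_filter_apply_zero_bernoulliWeight_mul_numTrue (p : ℝ) (f : ℕ → ℝ) :
    ∑ ω : Fin (m + 1) → Bool with ω 0 = true, bernoulliWeight p ω * f (numTrue ω)
      = p * ∑ k ∈ range (m + 1), Pr k m p * f (k + 1) := by
  rw [Fin.sum_filter_apply_zero_eq]
  simp only [bernoulliWeight_cons, numTrue_cons_true, if_true, mul_assoc]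
  rw [← mul_sum, sum_bernoulliWeight_mul_numTrue p (fun k => f (k + 1)), Fintype.card_fin]

end FinCons

/-- Model: `X_1, …, X_n` independent Bernoulli(p) on `Fin n → Bool` with product
weight `w`, `S` the number of positives, and conditionally on `S` the pool test
is positive with probability `q (S ω)`, where `q k = s k` for `k ≥ 1` and
`q 0 = 1 - Sp`.  If `P(T=0) > 0`, the posterior probability that a designated
subject is positive given a negative pool test is
`p·Σ_{k=1}^n (1-s_k)·Pr(k-1;n-1,p) / [Σ_{k=1}^n (1-s_k)·Pr(k;n,p) + Sp·(1-p)^n]`. -/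
theorem posterior_positive_given_negative_pool_test (n : ℕ) (hn : 1 ≤ n)
    (p Sp : ℝ) (s : ℕ → ℝ)
    (S : (Fin n → Bool) → ℕ)
    (hS : S = fun ω => (Finset.univ.filter fun i => ω i = true).card)
    (q : ℕ → ℝ) (hq : q = fun k => if k = 0 then 1 - Sp else s k)
    (w : (Fin n → Bool) → ℝ)
    (hw : w = fun ω => ∏ i, (if ω i then p else 1 - p)) :
    (∑ ω ∈ Finset.univ.filter (fun ω : Fin n → Bool => ω ⟨0, by omega⟩ = true),
        w ω * (1 - q (S ω))) /
      (∑ ω : Fin n → Bool, w ω * (1 - q (S ω)))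
    = p * (∑ k ∈ Finset.Icc 1 n, (1 - s k) * Pr (k - 1) (n - 1) p)
        / ((∑ k ∈ Finset.Icc 1 n, (1 - s k) * Pr k n p) + Sp * (1 - p) ^ n) := by
  obtain ⟨m, rfl⟩ : ∃ m, n = m + 1 := ⟨n - 1, by omega⟩
  replace hw : w = bernoulliWeight p := hw
  replace hS : S = numTrue := hS
  subst hw hS
  rw [Fin.zero_eta, sum_filter_apply_zero_bernoulliWeight_mul_numTrue p (fun k => 1 - q k),
    sum_bernoulliWeight_mul_numTrue p (fun k => 1 - q k), Fintype.card_fin,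
    sum_range_succ' _ (m + 1), sum_Icc_one_eq_sum_range, sum_Icc_one_eq_sum_range]
  subst hq
  simp [Pr, mul_comm]
end

section
/- Let n ≥ 1, r ≥ 2 be integers, p ∈ [0,1], Sp ∈ [0,1], s_1,…,s_n ∈ [0,1], and 2 ≤ l ≤ r. Define p_P = 1-(1-p)^n. In the modified Dorfman procedure, the probability that a given pool receives an l-th pool test (i.e. that its first l-1 independent pool tests are all negative) equals (1-p_P)·Sp^{l-1} + Σ_{k=1}^n (1-s_k)^{l-1}·Pr(k;n,p). -/
/-!
Both the weight of an outcome `ω` and the probability that its first `l - 1` pool tests are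
negative depend on `ω` only through its number `k` of positives. Grouping outcomes by `k`, each
of the `C(n, k)` outcomes with `k` positives has weight `p ^ k (1 - p) ^ (n - k)`, which produces
`Pr(k; n, p)`; the term `k = 0` is `(1 - p) ^ n Sp ^ (l - 1) = (1 - p_P) Sp ^ (l - 1)`.
-/

open Finset

section

variable {ι R : Type*} [Fintype ι] [DecidableEq ι] [CommSemiring R]

lemma prod_ite_mem_eq_pow_mul_pow (A : Finset ι) (a b : R) :
    ∏ i, (if i ∈ A then a else b) = a ^ #A * b ^ (Fintype.card ι - #A) := by
  rw [prod_ite, prod_const, prod_const, ← card_compl]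
  simp [compl_eq_univ_sdiff, filter_not]

def finsetEquivBoolFun : Finset ι ≃ (ι → Bool) where
  toFun A i := decide (i ∈ A)
  invFun ω := {i | ω i = true}
  left_inv A := by ext; simp
  right_inv ω := by ext; simp

theorem sum_prod_ite_mul_apply_card (a b : R) (g : ℕ → R) :
    ∑ ω : ι → Bool, (∏ i, if ω i then a else b) * g #{i | ω i = true}
      = ∑ k ∈ range (Fintype.card ι + 1),
          (Fintype.card ι).choose k * (a ^ k * b ^ (Fintype.card ι - k) * g k) := by
  calc ∑ ω : ι → Bool, (∏ i, if ω i then a else b) * g #{i | ω i = true}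
      = ∑ A : Finset ι, a ^ #A * b ^ (Fintype.card ι - #A) * g #A := by
        refine (Fintype.sum_equiv finsetEquivBoolFun _ _ fun A => ?_).symm
        simp [finsetEquivBoolFun, prod_ite_mem_eq_pow_mul_pow]
    _ = _ := by
        rw [← powerset_univ,
          sum_powerset_apply_card fun k => a ^ k * b ^ (Fintype.card ι - k) * g k, card_univ]
        simp only [nsmul_eq_mul]

end

lemma sum_range_succ_eq_add_sum_Icc {M : Type*} [AddCommMonoid M] (f : ℕ → M) (n : ℕ) :
    ∑ k ∈ range (n + 1), f k = f 0 + ∑ k ∈ Icc 1 n, f k := by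
  rw [range_eq_Ico, sum_eq_sum_Ico_succ_bot n.add_one_pos, zero_add,
    Ico_add_one_right_eq_Icc]

theorem prob_lth_pool_test_general (n l : ℕ)
    (p Sp : ℝ)
    (s : ℕ → ℝ)
    (S : (Fin n → Bool) → ℕ)
    (hS : S = fun ω => (Finset.univ.filter fun i => ω i = true).card)
    (w : (Fin n → Bool) → ℝ)
    (hw : w = fun ω => ∏ i, (if ω i then p else 1 - p)) :
    (∑ ω : Fin n → Bool,
        w ω * (if S ω = 0 then Sp else 1 - s (S ω)) ^ (l - 1))
      = (1 - (1 - (1 - p) ^ n)) * Sp ^ (l - 1)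
        + ∑ k ∈ Finset.Icc 1 n, (1 - s k) ^ (l - 1) * Pr k n p := by
  subst hS hw
  have h := sum_prod_ite_mul_apply_card (ι := Fin n) p (1 - p)
    fun k => (if k = 0 then Sp else 1 - s k) ^ (l - 1)
  rw [Fintype.card_fin, sum_range_succ_eq_add_sum_Icc] at h
  rw [h]
  congr 1
  · simp
  · refine sum_congr rfl fun k hk => ?_
    rw [if_neg (Nat.one_le_iff_ne_zero.mp (mem_Icc.mp hk).1), Pr]
    ring

/-- Model: `X_1, …, X_n` independent Bernoulli(p) on `Fin n → Bool` with product
weight `w`, `S` the number of positives. Given `S = k`, each of the repeated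
pool tests is independently negative with probability `Sp` if `k = 0` and
`1 - s k` if `k ≥ 1`. The probability that a pool receives an `l`-th test,
i.e. that its first `l-1` tests are all negative, equals
`(1-p_P)·Sp^{l-1} + Σ_{k=1}^n (1-s_k)^{l-1}·Pr(k;n,p)` with `p_P = 1-(1-p)^n`. -/
theorem prob_lth_pool_test (n r l : ℕ) (hn : 1 ≤ n) (hr : 2 ≤ r)
    (hl2 : 2 ≤ l) (hlr : l ≤ r)
    (p Sp : ℝ) (hp : p ∈ Set.Icc (0 : ℝ) 1) (hSp : Sp ∈ Set.Icc (0 : ℝ) 1)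
    (s : ℕ → ℝ) (hs : ∀ k ∈ Finset.Icc 1 n, s k ∈ Set.Icc (0 : ℝ) 1)
    (S : (Fin n → Bool) → ℕ)
    (hS : S = fun ω => (Finset.univ.filter fun i => ω i = true).card)
    (w : (Fin n → Bool) → ℝ)
    (hw : w = fun ω => ∏ i, (if ω i then p else 1 - p)) :
    (∑ ω : Fin n → Bool,
        w ω * (if S ω = 0 then Sp else 1 - s (S ω)) ^ (l - 1))
      = (1 - (1 - (1 - p) ^ n)) * Sp ^ (l - 1)
        + ∑ k ∈ Finset.Icc 1 n, (1 - s k) ^ (l - 1) * Pr k n p :=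
  prob_lth_pool_test_general n l p Sp s S hS w hw
end
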